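/- arXiv:1612.08244 — 3 statements merged into one kernel-verified Lean document; each statement's English description precedes it below -/
import Mathlib

section
/- Let L be a Leibniz algebra over a field 𝕜 with left center Z. For ω ∈ C^n(L) and η ∈ C^m(L), the product ω·η is a cochain in C^{n+m}(L); that is, ω·η satisfies the weak skew-symmetry condition: (ω·η)_k(…,e_a,e_{a+1},…; f₁,…,f_k) + (ω·η)_k(…,e_{a+1},e_a,…; f₁,…,f_k) = −(ω·η)_{k+1}(…,ê_a,ê_{a+1},…; (e_a,e_{a+1}), f₁,…,f_k) for all k, all e ∈ L and f ∈ Z. -/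
open scoped TensorProduct

universe u v w

/-- A (left) Leibniz algebra over a field `𝕜`. -/
structure LeibnizAlg (𝕜 : Type u) [Field 𝕜] (L : Type v) [AddCommGroup L] [Module 𝕜 L] where
  br : L →ₗ[𝕜] L →ₗ[𝕜] L
  leibniz : ∀ a b c : L, br a (br b c) = br (br a b) c + br b (br a c)

namespace LeibnizAlg

variable {𝕜 : Type u} [Field 𝕜] {L : Type v} [AddCommGroup L] [Module 𝕜 L]
variable (A : LeibnizAlg 𝕜 L)

/-- The left center `Z = {z | z ∘ e = 0 for all e}`. -/
def leftCenter : Submodule 𝕜 L where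
  carrier := {z | ∀ e : L, A.br z e = 0}
  add_mem' := by
    intro a b ha hb
    simp only [Set.mem_setOf_eq] at *
    intro e
    rw [map_add, LinearMap.add_apply, ha e, hb e, add_zero]
  zero_mem' := by
    simp only [Set.mem_setOf_eq]
    intro e
    rw [map_zero, LinearMap.zero_apply]
  smul_mem' := by
    intro c x hx
    simp only [Set.mem_setOf_eq] at *
    intro e
    rw [map_smul, LinearMap.smul_apply, hx e, smul_zero]

lemma mem_leftCenter_iff {z : L} : z ∈ A.leftCenter ↔ ∀ e : L, A.br z e = 0 := Iff.rfl

/-- The symmetric product `(a,b) = a∘b + b∘a`. -/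
def sp (a b : L) : L := A.br a b + A.br b a

lemma sp_mem (a b : L) : A.sp a b ∈ A.leftCenter := by
  rw [mem_leftCenter_iff]
  intro e
  have h1 := A.leibniz a b e
  have h2 := A.leibniz b a e
  have hx : A.br (A.br a b) e = A.br a (A.br b e) - A.br b (A.br a e) :=
    eq_sub_iff_add_eq.mpr h1.symm
  have hy : A.br (A.br b a) e = A.br b (A.br a e) - A.br a (A.br b e) :=
    eq_sub_iff_add_eq.mpr h2.symm
  rw [sp, map_add, LinearMap.add_apply, hx, hy]
  abel

/-- The symmetric product, seen as valued in the left center. -/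
def spZ (a b : L) : A.leftCenter := ⟨A.sp a b, A.sp_mem a b⟩

lemma br_mem (e : L) (f : A.leftCenter) : A.br e (f : L) ∈ A.leftCenter := by
  rw [mem_leftCenter_iff]
  intro e'
  have h := A.leibniz e (f : L) e'
  have hf : A.br (f : L) e' = 0 := (A.mem_leftCenter_iff.mp f.2) e'
  have hf2 : A.br (f : L) (A.br e e') = 0 := (A.mem_leftCenter_iff.mp f.2) _
  rw [hf] at h
  rw [map_zero] at h
  rw [hf2, add_zero] at h
  exact h.symm

/-- The bracket of `L` on its left center. -/
def brZ (e : L) (f : A.leftCenter) : A.leftCenter := ⟨A.br e (f : L), A.br_mem e f⟩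

/-- The symmetric product as a bilinear map into the left center. -/
noncomputable def spL : L →ₗ[𝕜] L →ₗ[𝕜] A.leftCenter :=
  LinearMap.mk₂ 𝕜 A.spZ
    (fun a a' b => Subtype.ext (by
      simp only [spZ, sp, map_add, LinearMap.add_apply, Submodule.coe_add]
      abel))
    (fun c a b => Subtype.ext (by
      simp only [spZ, sp, map_smul, LinearMap.smul_apply, SetLike.val_smul, smul_add]))
    (fun a b b' => Subtype.ext (by
      simp only [spZ, sp, map_add, LinearMap.add_apply, Submodule.coe_add]
      abel))
    (fun c a b => Subtype.ext (by
      simp only [spZ, sp, map_smul, LinearMap.smul_apply, SetLike.val_smul, smul_add]))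

end LeibnizAlg

/-- `(S, ι)` is (a model of) the symmetric algebra of the module `Z`:
it satisfies the universal property. -/
def IsSymAlg {𝕜 : Type u} [Field 𝕜] {Z : Type v} [AddCommGroup Z] [Module 𝕜 Z]
    (S : Type w) [CommRing S] [Algebra 𝕜 S] (ι : Z →ₗ[𝕜] S) : Prop :=
  ∀ (B : Type (max u v w)) [CommRing B] [Algebra 𝕜 B] (g : Z →ₗ[𝕜] B),
    ∃! h : S →ₐ[𝕜] B, ∀ z : Z, h (ι z) = g z

section Shuffles

/-- All ways of splitting a list into a signed pair of complementary subsequences. -/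
def shSplits {α : Type*} : List α → List (ℤ × List α × List α)
  | [] => [(1, [], [])]
  | a :: l =>
      ((shSplits l).map fun t => (t.1, a :: t.2.1, t.2.2)) ++
      ((shSplits l).map fun t => ((-1) ^ t.2.1.length * t.1, t.2.1, a :: t.2.2))

/-- Signed sum over all `(p, l.length - p)`-shuffles of the list `l`. -/
def shSum {α : Type*} {S : Type*} [AddCommGroup S] (p : ℕ) (l : List α)
    (F : List α → List α → S) : S :=
  (((shSplits l).filter fun t => t.2.1.length == p).map fun t => t.1 • F t.2.1 t.2.2).sum

/-- Unsigned sum over all `(p, l.length - p)`-shuffles of the list `l`. -/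
def shSumU {α : Type*} {S : Type*} [AddCommMonoid S] (p : ℕ) (l : List α)
    (F : List α → List α → S) : S :=
  (((shSplits l).filter fun t => t.2.1.length == p).map fun t => F t.2.1 t.2.2).sum

end Shuffles

section Cochains

variable {𝕜 : Type u} [Field 𝕜] {L : Type v} [AddCommGroup L] [Module 𝕜 L]
variable (A : LeibnizAlg 𝕜 L)
variable (S : Type w) [CommRing S] [Algebra 𝕜 S]
variable (ι : A.leftCenter →ₗ[𝕜] S)

/-- `ω` is an `n`-cochain in the standard complex `C(L) = C(L, Z, S^•(Z))`:
its component `ω k`, defined on tuples `es` of `n - 2k` elements of `L` and `k`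
elements of the left center, is multilinear, symmetric in the `Z`-arguments, and
weakly skew-symmetric in the `L`-arguments. -/
structure IsCochain (n : ℕ) (ω : ℕ → List L → List A.leftCenter → S) : Prop where
  add_e : ∀ (k : ℕ) (p q : List L) (x y : L) (fs : List A.leftCenter),
    2*k + (p.length + 1 + q.length) = n → fs.length = k →
    ω k (p ++ (x + y) :: q) fs = ω k (p ++ x :: q) fs + ω k (p ++ y :: q) fs
  smul_e : ∀ (k : ℕ) (p q : List L) (c : 𝕜) (x : L) (fs : List A.leftCenter),
    2*k + (p.length + 1 + q.length) = n → fs.length = k →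
    ω k (p ++ (c • x) :: q) fs = c • ω k (p ++ x :: q) fs
  add_f : ∀ (k : ℕ) (es : List L) (p q : List A.leftCenter) (x y : A.leftCenter),
    2*k + es.length = n → p.length + 1 + q.length = k →
    ω k es (p ++ (x + y) :: q) = ω k es (p ++ x :: q) + ω k es (p ++ y :: q)
  smul_f : ∀ (k : ℕ) (es : List L) (p q : List A.leftCenter) (c : 𝕜) (x : A.leftCenter),
    2*k + es.length = n → p.length + 1 + q.length = k →
    ω k es (p ++ (c • x) :: q) = c • ω k es (p ++ x :: q)
  symm_f : ∀ (k : ℕ) (es : List L) (p q : List A.leftCenter) (x y : A.leftCenter),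
    2*k + es.length = n → p.length + 2 + q.length = k →
    ω k es (p ++ x :: y :: q) = ω k es (p ++ y :: x :: q)
  skew : ∀ (k : ℕ) (p q : List L) (x y : L) (fs : List A.leftCenter),
    2*k + (p.length + 2 + q.length) = n → fs.length = k →
    ω k (p ++ x :: y :: q) fs + ω k (p ++ y :: x :: q) fs
      = - ω (k+1) (p ++ q) (A.spZ x y :: fs)

/-- The product of an `n`-cochain and an `m`-cochain. -/
def cmul (n m : ℕ) (ω η : ℕ → List L → List A.leftCenter → S) :
    ℕ → List L → List A.leftCenter → S :=
  fun k es fs => ∑ i ∈ Finset.range (k+1),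
    if 2*i ≤ n ∧ 2*(k-i) ≤ m then
      shSum (n - 2*i) es fun es₁ es₂ =>
        shSumU i fs fun fs₁ fs₂ => ω i es₁ fs₁ * η (k-i) es₂ fs₂
    else 0

/-- The operator `d₀` of the standard complex, where `ρ` is the action of `L` on
`S^•(Z)` by derivations. -/
def cd0 (ρ : L → Derivation 𝕜 S S) (ω : ℕ → List L → List A.leftCenter → S) :
    ℕ → List L → List A.leftCenter → S :=
  fun k es fs =>
    (∑ a ∈ Finset.range es.length,
      (-1 : ℤ)^a • ρ (es.getD a 0) (ω k (es.eraseIdx a) fs))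
    + ∑ a ∈ Finset.range es.length, ∑ b ∈ Finset.Ico (a+1) es.length,
        (-1 : ℤ)^(a+1) •
          ω k ((es.eraseIdx a).set (b-1) (A.br (es.getD a 0) (es.getD b 0))) fs

/-- The operator `δ` of the standard complex. -/
def cdel (ω : ℕ → List L → List A.leftCenter → S) :
    ℕ → List L → List A.leftCenter → S :=
  fun k es fs => ∑ j ∈ Finset.range fs.length,
    ω (k-1) (((fs.getD j 0 : A.leftCenter) : L) :: es) (fs.eraseIdx j)

/-- The symmetric product with values pushed into `S = S^•(Z)`. -/
noncomputable def spS : L →ₗ[𝕜] L →ₗ[𝕜] S := (A.spL).compr₂ ι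

/-- The `S^•(Z)`-bilinear extension of the symmetric product to `S^•(Z) ⊗ L`. -/
noncomputable def pairT : (S ⊗[𝕜] L) →ₗ[𝕜] (S ⊗[𝕜] L) →ₗ[𝕜] S :=
  TensorProduct.curry <|
    (TensorProduct.lift (LinearMap.mul 𝕜 S)).comp <|
      (TensorProduct.map (TensorProduct.lift (LinearMap.mul 𝕜 S))
        (TensorProduct.lift (spS A S ι))).comp
        (TensorProduct.tensorTensorTensorComm 𝕜 S L S L).toLinearMap

/-- `ω` is a representable `n`-cochain: each of the maps
`e ↦ ω k (es ++ [e]) fs` lies in the image of `φ = pairT`. -/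
def IsRepr (n : ℕ) (ω : ℕ → List L → List A.leftCenter → S) : Prop :=
  ∀ (k : ℕ) (es : List L) (fs : List A.leftCenter),
    2*k + (es.length + 1) = n → fs.length = k →
    ∃ x : S ⊗[𝕜] L, ∀ e : L, pairT A S ι x ((1 : S) ⊗ₜ[𝕜] e) = ω k (es ++ [e]) fs

/-- `ωt` is a choice of `φ`-preimages `ω̃` for the representable cochain `ω`. -/
def IsPre (n : ℕ) (ω : ℕ → List L → List A.leftCenter → S)
    (ωt : ℕ → List L → List A.leftCenter → S ⊗[𝕜] L) : Prop :=
  ∀ (k : ℕ) (es : List L) (fs : List A.leftCenter),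
    2*k + (es.length + 1) = n → fs.length = k →
    ∀ e : L, pairT A S ι (ωt k es fs) ((1 : S) ⊗ₜ[𝕜] e) = ω k (es ++ [e]) fs

/-- `ωc k es x fs` is the extension `ω̌` of `ω (k+1) es (·::fs)` from `Z` to all of
`S = S^•(Z)` in its first `Z`-slot, by the Leibniz rule. -/
structure IsExt (n : ℕ) (ω : ℕ → List L → List A.leftCenter → S)
    (ωc : ℕ → List L → S → List A.leftCenter → S) : Prop where
  on_gen : ∀ (k : ℕ) (es : List L) (fs : List A.leftCenter) (f : A.leftCenter),
    2*(k+1) + es.length = n → fs.length = k →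
    ωc k es (ι f) fs = ω (k+1) es (f :: fs)
  map_add : ∀ (k : ℕ) (es : List L) (fs : List A.leftCenter) (x y : S),
    2*(k+1) + es.length = n → fs.length = k →
    ωc k es (x + y) fs = ωc k es x fs + ωc k es y fs
  map_smul : ∀ (k : ℕ) (es : List L) (fs : List A.leftCenter) (c : 𝕜) (x : S),
    2*(k+1) + es.length = n → fs.length = k →
    ωc k es (c • x) fs = c • ωc k es x fs
  mul_rule : ∀ (k : ℕ) (es : List L) (fs : List A.leftCenter) (x y : S),
    2*(k+1) + es.length = n → fs.length = k →
    ωc k es (x * y) fs = x * ωc k es y fs + y * ωc k es x fs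

/-- The operation `ω ◇ η` built from the Leibniz-rule extension `ωc` of `ω`. -/
def cdiam (n m : ℕ) (ωc : ℕ → List L → S → List A.leftCenter → S)
    (η : ℕ → List L → List A.leftCenter → S) : ℕ → List L → List A.leftCenter → S :=
  fun k es fs => ∑ i ∈ Finset.range (k+1),
    if 2*(i+1) ≤ n ∧ 2*(k-i) ≤ m then
      shSum (n - 2*i - 2) es fun es₁ es₂ =>
        shSumU (k-i) fs fun fs₁ fs₂ => ωc i es₁ (η (k-i) es₂ fs₁) fs₂
    else 0

/-- The operation `ω • η` built from chosen `φ`-preimages `ωt`, `ηt`. -/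
noncomputable def cbull (n m : ℕ)
    (ωt ηt : ℕ → List L → List A.leftCenter → S ⊗[𝕜] L) :
    ℕ → List L → List A.leftCenter → S :=
  fun k es fs => (-1 : ℤ)^(m-1) • ∑ i ∈ Finset.range (k+1),
    if 2*i + 1 ≤ n ∧ 2*(k-i) + 1 ≤ m then
      shSum (n - 2*i - 1) es fun es₁ es₂ =>
        shSumU i fs fun fs₁ fs₂ => pairT A S ι (ωt i es₁ fs₁) (ηt (k-i) es₂ fs₂)
    else 0

/-- The bracket `{ω, η} = ω•η + ω◇η − (−1)^{nm} η◇ω` of representable cochains. -/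
noncomputable def cpbr (n m : ℕ)
    (ω η : ℕ → List L → List A.leftCenter → S)
    (ωt ηt : ℕ → List L → List A.leftCenter → S ⊗[𝕜] L)
    (ωc ηc : ℕ → List L → S → List A.leftCenter → S) :
    ℕ → List L → List A.leftCenter → S :=
  fun k es fs => cbull A S ι n m ωt ηt k es fs + cdiam A S n m ωc η k es fs
    - (-1 : ℤ)^(n*m) • cdiam A S m n ηc ω k es fs

/-- The canonical 3-cochain `Θ`. -/
def ThetaC : ℕ → List L → List A.leftCenter → S :=
  fun k es fs => match k, es, fs with
    | 0, [e₁, e₂, e₃], [] => ι (A.spZ (A.br e₁ e₂) e₃)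
    | 1, [e], [f] => - ι (A.spZ e (f : L))
    | _, _, _ => 0

/-- The 2-cochain `ζ` with `ζ₀ = (·,·)` and `ζ₁(f) = −2f`. -/
def zetaC : ℕ → List L → List A.leftCenter → S :=
  fun k es fs => match k, es, fs with
    | 0, [e₁, e₂], [] => ι (A.spZ e₁ e₂)
    | 1, [], [f] => (-2 : 𝕜) • ι f
    | _, _, _ => 0

/-- The representable 1-cochain `e^♭ = (e, ·)`. -/
def eflat (e : L) : ℕ → List L → List A.leftCenter → S :=
  fun k es fs => match k, es, fs with
    | 0, [e'], [] => ι (A.spZ e e')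
    | _, _, _ => 0

end Cochains



section Lemmas

variable {α : Type*} {S : Type*} [AddCommGroup S]

lemma shSplits_length {l : List α} : ∀ t ∈ shSplits l, t.2.1.length + t.2.2.length = l.length := by
  induction l with
  | nil => intro t ht; simp [shSplits] at ht; subst ht; rfl
  | cons a l ih =>
    intro t ht
    simp only [shSplits, List.mem_append, List.mem_map] at ht
    rcases ht with ⟨u, hu, rfl⟩ | ⟨u, hu, rfl⟩ <;>
      · have := ih u hu; simp; omega

lemma shSum_zero_of_lt {p : ℕ} {l : List α} (h : l.length < p) (F : List α → List α → S) :
    shSum p l F = 0 := by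
  rw [shSum, List.filter_eq_nil_iff.mpr, List.map_nil, List.sum_nil]
  intro t ht
  have := shSplits_length t ht
  simp only [beq_iff_eq]
  omega

lemma shSumU_zero_of_lt {p : ℕ} {l : List α} (h : l.length < p) (F : List α → List α → S) :
    shSumU p l F = 0 := by
  rw [shSumU, List.filter_eq_nil_iff.mpr, List.map_nil, List.sum_nil]
  intro t ht
  have := shSplits_length t ht
  simp only [beq_iff_eq]
  omega

lemma shSum_congr {p : ℕ} {l : List α} {F G : List α → List α → S}
    (h : ∀ A B, A.length = p → A.length + B.length = l.length → F A B = G A B) :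
    shSum p l F = shSum p l G := by
  unfold shSum
  congr 1
  apply List.map_congr_left
  intro t ht
  rw [List.mem_filter] at ht
  have h1 := shSplits_length t ht.1
  have h2 : t.2.1.length = p := by simpa using ht.2
  rw [h t.2.1 t.2.2 h2 h1]

lemma shSumU_congr {p : ℕ} {l : List α} {F G : List α → List α → S}
    (h : ∀ A B, A.length = p → A.length + B.length = l.length → F A B = G A B) :
    shSumU p l F = shSumU p l G := by
  unfold shSumU
  congr 1
  apply List.map_congr_left
  intro t ht
  rw [List.mem_filter] at ht
  have h1 := shSplits_length t ht.1
  have h2 : t.2.1.length = p := by simpa using ht.2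
  rw [h t.2.1 t.2.2 h2 h1]

lemma sum_map_add {β : Type*} (L : List β) (f g : β → S) :
    (L.map fun t => f t + g t).sum = (L.map f).sum + (L.map g).sum := by
  induction L with
  | nil => simp
  | cons a L ih => simp [ih]; abel

lemma shSumU_add {p : ℕ} {l : List α} (F G : List α → List α → S) :
    shSumU p l (fun A B => F A B + G A B) = shSumU p l F + shSumU p l G := by
  unfold shSumU; exact sum_map_add _ _ _

lemma shSum_add {p : ℕ} {l : List α} (F G : List α → List α → S) :
    shSum p l (fun A B => F A B + G A B) = shSum p l F + shSum p l G := by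
  unfold shSum
  rw [← sum_map_add]
  congr 1
  apply List.map_congr_left
  intro t _
  simp [smul_add]

lemma sum_map_neg {β : Type*} (L : List β) (f : β → S) :
    (L.map fun t => - f t).sum = - (L.map f).sum := by
  induction L with
  | nil => simp
  | cons a L ih => simp [ih]; abel

lemma shSum_neg {p : ℕ} {l : List α} (F : List α → List α → S) :
    shSum p l (fun A B => - F A B) = - shSum p l F := by
  unfold shSum
  rw [← sum_map_neg]
  congr 1
  apply List.map_congr_left
  intro t _
  simp [smul_neg]

lemma shSum_zero_fn {p : ℕ} {l : List α} :
    shSum p l (fun _ _ => (0 : S)) = 0 := by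
  unfold shSum
  rw [List.sum_eq_zero]
  intro x hx
  simp only [List.mem_map] at hx
  obtain ⟨t, _, rfl⟩ := hx
  simp

end Lemmas

section ConsLemmas

variable {α : Type*} {S : Type*} [AddCommGroup S]

lemma shSum_cons (p : ℕ) (a : α) (l : List α) (F : List α → List α → S) :
    shSum p (a :: l) F =
      (match p with
       | 0 => 0
       | q+1 => shSum q l fun A B => F (a::A) B)
      + (-1 : ℤ)^p • shSum p l fun A B => F A (a::B) := by
  unfold shSum
  rw [shSplits, List.filter_append, List.map_append, List.sum_append]
  congr 1
  · rw [List.filter_map, List.map_map]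
    match p with
    | 0 =>
      simp only []
      rw [List.filter_eq_nil_iff.mpr, List.map_nil, List.sum_nil]
      intro t _
      simp
    | q+1 =>
      simp only []
      congr 1
      · congr 1
        apply List.filter_congr
        intro t _
        simp [Function.comp]
  · rw [List.filter_map, List.map_map]
    have hfil : ((shSplits l).filter fun t => ((fun t => t.2.1.length == p) ∘
        (fun t : ℤ × List α × List α => ((-1:ℤ) ^ t.2.1.length * t.1, t.2.1, a :: t.2.2))) t)
        = (shSplits l).filter fun t => t.2.1.length == p := by
      apply List.filter_congr
      intro t _
      simp [Function.comp]
    rw [hfil, List.smul_sum, List.map_map]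
    congr 1
    apply List.map_congr_left
    intro t ht
    rw [List.mem_filter] at ht
    have h2 : t.2.1.length = p := by simpa using ht.2
    simp [Function.comp, h2, mul_smul]

lemma shSumU_cons (p : ℕ) (a : α) (l : List α) (F : List α → List α → S) :
    shSumU p (a :: l) F =
      (match p with
       | 0 => 0
       | q+1 => shSumU q l fun A B => F (a::A) B)
      + shSumU p l fun A B => F A (a::B) := by
  unfold shSumU
  rw [shSplits, List.filter_append, List.map_append, List.sum_append]
  congr 1
  · rw [List.filter_map, List.map_map]
    match p with
    | 0 =>
      simp only []
      rw [List.filter_eq_nil_iff.mpr, List.map_nil, List.sum_nil]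
      intro t _
      simp
    | q+1 =>
      simp only []
      congr 1
      congr 1
      apply List.filter_congr
      intro t _
      simp [Function.comp]
  · rw [List.filter_map, List.map_map]
    have hfil : ((shSplits l).filter fun t => ((fun t => t.2.1.length == p) ∘
        (fun t : ℤ × List α × List α => ((-1:ℤ) ^ t.2.1.length * t.1, t.2.1, a :: t.2.2))) t)
        = (shSplits l).filter fun t => t.2.1.length == p := by
      apply List.filter_congr
      intro t _
      simp [Function.comp]
    rw [hfil]
    congr 1

end ConsLemmas

section SwapLemma

variable {α : Type*} {S : Type*} [AddCommGroup S]

lemma shSum_cons_zero (a : α) (l : List α) (F : List α → List α → S) :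
    shSum 0 (a :: l) F = shSum 0 l fun A B => F A (a::B) := by
  rw [shSum_cons]; simp

lemma shSum_cons_succ (q : ℕ) (a : α) (l : List α) (F : List α → List α → S) :
    shSum (q+1) (a :: l) F = shSum q l (fun A B => F (a::A) B)
      + (-1 : ℤ)^(q+1) • shSum (q+1) l fun A B => F A (a::B) := by
  rw [shSum_cons]

lemma shSumU_cons_zero (a : α) (l : List α) (F : List α → List α → S) :
    shSumU 0 (a :: l) F = shSumU 0 l fun A B => F A (a::B) := by
  rw [shSumU_cons]; simp

lemma shSumU_cons_succ (q : ℕ) (a : α) (l : List α) (F : List α → List α → S) :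
    shSumU (q+1) (a :: l) F = shSumU q l (fun A B => F (a::A) B)
      + shSumU (q+1) l fun A B => F A (a::B) := by
  rw [shSumU_cons]

lemma shSum_cons2_zero (x y : α) (l : List α) (F : List α → List α → S) :
    shSum 0 (x :: y :: l) F = shSum 0 l fun A B => F A (x::y::B) := by
  rw [shSum_cons_zero, shSum_cons_zero]

lemma shSum_cons2_one (x y : α) (l : List α) (F : List α → List α → S) :
    shSum 1 (x :: y :: l) F = shSum 0 l (fun A B => F (x::A) (y::B))
      - shSum 0 l (fun A B => F (y::A) (x::B))
      + shSum 1 l (fun A B => F A (x::y::B)) := by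
  rw [shSum_cons_succ 0 x, shSum_cons_zero y, shSum_cons_succ 0 y]
  simp only [pow_one, neg_one_smul, neg_add_rev, zero_add, smul_add]
  abel

lemma shSum_cons2_succ (q : ℕ) (x y : α) (l : List α) (F : List α → List α → S) :
    shSum (q+2) (x :: y :: l) F = shSum q l (fun A B => F (x::y::A) B)
      + (-1:ℤ)^(q+1) • shSum (q+1) l (fun A B => F (x::A) (y::B))
      - (-1:ℤ)^(q+1) • shSum (q+1) l (fun A B => F (y::A) (x::B))
      + shSum (q+2) l (fun A B => F A (x::y::B)) := by
  rw [shSum_cons_succ (q+1) x, shSum_cons_succ q y, shSum_cons_succ (q+1) y]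
  have h1 : ((-1:ℤ)^(q+1+1)) = -((-1:ℤ)^(q+1)) := by ring
  have h2 : ((-1:ℤ)^(q+1+1)) • ((-1:ℤ)^(q+1+1)) •
      (shSum (q+1+1) l fun A B => F A (x::y::B))
      = shSum (q+2) l fun A B => F A (x::y::B) := by
    rw [smul_smul, ← pow_add, Even.neg_one_pow ⟨q+2, by ring⟩, one_smul]
  rw [smul_add, h2, h1, neg_smul]
  abel

lemma shSum_swap (x y : α) :
    ∀ (pre suf : List α) (p : ℕ) (F G H : List α → List α → S),
    (∀ l₁ l₂ B, l₁.length + 2 + l₂.length = p →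
        l₁.length + l₂.length + B.length = pre.length + suf.length →
        F (l₁ ++ x :: y :: l₂) B + F (l₁ ++ y :: x :: l₂) B = G (l₁ ++ l₂) B) →
    (∀ A m₁ m₂, A.length = p →
        A.length + m₁.length + m₂.length = pre.length + suf.length →
        F A (m₁ ++ x :: y :: m₂) + F A (m₁ ++ y :: x :: m₂) = H A (m₁ ++ m₂)) →
    shSum p (pre ++ x :: y :: suf) F + shSum p (pre ++ y :: x :: suf) F
      = (if 2 ≤ p then shSum (p - 2) (pre ++ suf) G else 0) + shSum p (pre ++ suf) H := by
  intro pre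
  induction pre with
  | nil =>
    intro suf p F G H hF hH
    simp only [List.nil_append, List.length_nil, Nat.zero_add] at *
    match p with
    | 0 =>
      rw [shSum_cons2_zero x y, shSum_cons2_zero y x, ← shSum_add,
        if_neg (by omega), zero_add]
      apply shSum_congr
      intro A B hA hAB
      have := hH A [] B hA (by simp only [List.length_nil]; omega)
      simpa using this
    | 1 =>
      rw [shSum_cons2_one x y, shSum_cons2_one y x, if_neg (by omega), zero_add]
      have key : shSum 1 suf (fun A B => F A (x::y::B)) + shSum 1 suf (fun A B => F A (y::x::B))
          = shSum 1 suf H := by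
        rw [← shSum_add]
        apply shSum_congr
        intro A B hA hAB
        have := hH A [] B hA (by simp only [List.length_nil]; omega)
        simpa using this
      calc _ = (shSum 1 suf (fun A B => F A (x::y::B)) + shSum 1 suf (fun A B => F A (y::x::B)))
            := by abel
        _ = shSum 1 suf H := key
    | (q+2) =>
      rw [shSum_cons2_succ q x y, shSum_cons2_succ q y x, if_pos (by omega)]
      have hqq : q + 2 - 2 = q := by omega
      rw [hqq]
      have keyG : shSum q suf (fun A B => F (x::y::A) B) + shSum q suf (fun A B => F (y::x::A) B)
          = shSum q suf G := by
        rw [← shSum_add]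
        apply shSum_congr
        intro A B hA hAB
        have := hF [] A B (by simp only [List.length_nil]; omega)
          (by simp only [List.length_nil]; omega)
        simpa using this
      have keyH : shSum (q+2) suf (fun A B => F A (x::y::B)) + shSum (q+2) suf (fun A B => F A (y::x::B))
          = shSum (q+2) suf H := by
        rw [← shSum_add]
        apply shSum_congr
        intro A B hA hAB
        have := hH A [] B hA (by simp only [List.length_nil]; omega)
        simpa using this
      calc _ = (shSum q suf (fun A B => F (x::y::A) B) + shSum q suf (fun A B => F (y::x::A) B))
            + (shSum (q+2) suf (fun A B => F A (x::y::B)) + shSum (q+2) suf (fun A B => F A (y::x::B)))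
            := by abel
        _ = _ := by rw [keyG, keyH]
  | cons a pre ih =>
    intro suf p F G H hF hH
    simp only [List.cons_append, List.length_cons] at *
    match p with
    | 0 =>
      rw [shSum_cons_zero a _ F, shSum_cons_zero a _ F, shSum_cons_zero a _ H,
        if_neg (by omega), zero_add]
      have := ih suf 0 (fun A B => F A (a::B)) (fun A B => G A (a::B)) (fun A B => H A (a::B))
        (by intro l₁ l₂ B h1 h2; omega)
        (by
          intro A m₁ m₂ h1 h2
          have := hH A (a::m₁) m₂ h1 (by simp only [List.length_cons]; omega)
          simpa using this)
      rw [if_neg (by omega), zero_add] at this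
      exact this
    | (q+1) =>
      rw [shSum_cons_succ q a _ F, shSum_cons_succ q a _ F, shSum_cons_succ q a _ H]
      have ih1 := ih suf q (fun A B => F (a::A) B) (fun A B => G (a::A) B) (fun A B => H (a::A) B)
        (by
          intro l₁ l₂ B h1 h2
          have := hF (a::l₁) l₂ B (by simp only [List.length_cons]; omega)
            (by simp only [List.length_cons]; omega)
          simpa using this)
        (by
          intro A m₁ m₂ h1 h2
          have := hH (a::A) m₁ m₂ (by simp only [List.length_cons]; omega)
            (by simp only [List.length_cons]; omega)
          simpa using this)
      have ih2 := ih suf (q+1) (fun A B => F A (a::B)) (fun A B => G A (a::B)) (fun A B => H A (a::B))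
        (by
          intro l₁ l₂ B h1 h2
          have := hF l₁ l₂ (a::B) h1 (by simp only [List.length_cons]; omega)
          simpa using this)
        (by
          intro A m₁ m₂ h1 h2
          have := hH A (a::m₁) m₂ h1 (by simp only [List.length_cons]; omega)
          simpa using this)
      have hG : (if 2 ≤ q then shSum (q - 2) (pre ++ suf) (fun A B => G (a::A) B) else 0)
          + (-1:ℤ)^(q+1) • (if 2 ≤ q+1 then shSum (q+1-2) (pre ++ suf) (fun A B => G A (a::B)) else 0)
          = (if 2 ≤ q + 1 then shSum (q + 1 - 2) (a :: (pre ++ suf)) G else 0) := by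
        match q with
        | 0 => simp
        | 1 =>
          rw [if_neg (by omega), if_pos (by omega), if_pos (by omega), zero_add]
          show _ = shSum 0 _ G
          rw [shSum_cons_zero]
          simp
        | (r+2) =>
          rw [if_pos (by omega), if_pos (by omega), if_pos (by omega)]
          have h1 : r + 2 - 2 = r := by omega
          have h2 : r + 2 + 1 - 2 = r + 1 := by omega
          rw [h1, h2, shSum_cons_succ r]
          congr 2
          ring
      calc shSum q (pre ++ x :: y :: suf) (fun A B => F (a :: A) B) +
            (-1:ℤ)^(q+1) • shSum (q+1) (pre ++ x :: y :: suf) (fun A B => F A (a :: B)) +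
            (shSum q (pre ++ y :: x :: suf) (fun A B => F (a :: A) B) +
            (-1:ℤ)^(q+1) • shSum (q+1) (pre ++ y :: x :: suf) (fun A B => F A (a :: B)))
          = (shSum q (pre ++ x :: y :: suf) (fun A B => F (a :: A) B) +
              shSum q (pre ++ y :: x :: suf) (fun A B => F (a :: A) B))
            + (-1:ℤ)^(q+1) • (shSum (q+1) (pre ++ x :: y :: suf) (fun A B => F A (a :: B)) +
              shSum (q+1) (pre ++ y :: x :: suf) (fun A B => F A (a :: B))) := by
            rw [smul_add]; abel
        _ = ((if 2 ≤ q then shSum (q - 2) (pre ++ suf) (fun A B => G (a::A) B) else 0) +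
              shSum q (pre ++ suf) (fun A B => H (a::A) B))
            + (-1:ℤ)^(q+1) • ((if 2 ≤ q+1 then shSum (q+1-2) (pre ++ suf) (fun A B => G A (a::B)) else 0) +
              shSum (q+1) (pre ++ suf) (fun A B => H A (a::B))) := by rw [ih1, ih2]
        _ = _ := by
            rw [smul_add, ← hG]
            abel

end SwapLemma

section MainProof

variable {α' : Type*} {S' : Type*} [AddCommGroup S']

lemma shSumU_neg {p : ℕ} {l : List α'} (F : List α' → List α' → S') :
    shSumU p l (fun A B => - F A B) = - shSumU p l F := by
  unfold shSumU
  rw [← sum_map_neg]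

variable {𝕜 : Type u} [Field 𝕜] {L : Type v} [AddCommGroup L] [Module 𝕜 L]

lemma cmul_skew_aux (A : LeibnizAlg 𝕜 L) (S : Type w) [CommRing S] [Algebra 𝕜 S]
    (n m : ℕ) (ω η : ℕ → List L → List A.leftCenter → S)
    (hω : IsCochain A S n ω) (hη : IsCochain A S m η)
    (k : ℕ) (p q : List L) (x y : L) (fs : List A.leftCenter)
    (hlen : 2*k + (p.length + 2 + q.length) = n + m) (hfs : fs.length = k) :
    cmul A S n m ω η k (p ++ x :: y :: q) fs
      + cmul A S n m ω η k (p ++ y :: x :: q) fs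
      = - cmul A S n m ω η (k+1) (p ++ q) (A.spZ x y :: fs) := by
  set f := A.spZ x y with hf
  set T1 : ℕ → S := fun i => shSum (n - 2*(i+1)) (p ++ q)
    (fun A' B => shSumU i fs fun fs₁ fs₂ => ω (i+1) A' (f::fs₁) * η (k-i) B fs₂) with hT1def
  set T2 : ℕ → S := fun i => shSum (n - 2*i) (p ++ q)
    (fun A' B => shSumU i fs fun fs₁ fs₂ => ω i A' fs₁ * η (k+1-i) B (f::fs₂)) with hT2def
  have hT1 : ∀ j, T1 j = shSum (n - 2*(j+1)) (p ++ q)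
      (fun A' B => shSumU j fs fun fs₁ fs₂ => ω (j+1) A' (f::fs₁) * η (k-j) B fs₂) :=
    fun j => rfl
  have hT2 : ∀ j, T2 j = shSum (n - 2*j) (p ++ q)
      (fun A' B => shSumU j fs fun fs₁ fs₂ => ω j A' fs₁ * η (k+1-j) B (f::fs₂)) :=
    fun j => rfl
  set d : ℕ → S := fun i' => if 2*i' ≤ n ∧ 2 ≤ 2*i' ∧ 2*(k+1-i') ≤ m then
      shSum (n - 2*i') (p ++ q)
        (fun A' B => shSumU (i'-1) fs fun fs₁ fs₂ => ω i' A' (f::fs₁) * η (k+1-i') B fs₂)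
    else 0 with hddef
  have hd : ∀ j, d j = if 2*j ≤ n ∧ 2 ≤ 2*j ∧ 2*(k+1-j) ≤ m then
      shSum (n - 2*j) (p ++ q)
        (fun A' B => shSumU (j-1) fs fun fs₁ fs₂ => ω j A' (f::fs₁) * η (k+1-j) B fs₂)
    else 0 := fun j => rfl
  set w : ℕ → S := fun i' => if 2*i' ≤ n ∧ 2*(k+1-i') ≤ m then
      shSum (n - 2*i') (p ++ q)
        (fun A' B => shSumU i' fs fun fs₁ fs₂ => ω i' A' fs₁ * η (k+1-i') B (f::fs₂))
    else 0 with hwdef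
  have hw : ∀ j, w j = if 2*j ≤ n ∧ 2*(k+1-j) ≤ m then
      shSum (n - 2*j) (p ++ q)
        (fun A' B => shSumU j fs fun fs₁ fs₂ => ω j A' fs₁ * η (k+1-j) B (f::fs₂))
    else 0 := fun j => rfl
  -- Step 1: the right-hand side splits
  have rhs_split : cmul A S n m ω η (k+1) (p ++ q) (f :: fs)
      = ∑ i ∈ Finset.range (k+1),
          ((if 2*(i+1) ≤ n ∧ 2*(k-i) ≤ m then T1 i else 0)
            + (if 2*i ≤ n ∧ 2*(k+1-i) ≤ m then T2 i else 0)) := by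
    rw [cmul]
    have step : ∀ i' ∈ Finset.range (k+2),
        (if 2*i' ≤ n ∧ 2*((k+1)-i') ≤ m then
          shSum (n - 2*i') (p ++ q) fun es₁ es₂ =>
            shSumU i' (f::fs) fun fs₁ fs₂ => ω i' es₁ fs₁ * η ((k+1)-i') es₂ fs₂
        else 0) = d i' + w i' := by
      intro i' _
      match i' with
      | 0 =>
        have hd0 : d 0 = 0 := by rw [hd 0]; exact if_neg (by omega)
        rw [hd0, zero_add, hw 0]
        by_cases hc : 2*0 ≤ n ∧ 2*(k+1-0) ≤ m
        · rw [if_pos hc, if_pos hc]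
          apply shSum_congr
          intro A' B _ _
          rw [shSumU_cons_zero]
        · rw [if_neg hc, if_neg hc]
      | (i+1) =>
        rw [hd (i+1), hw (i+1)]
        by_cases hc : 2*(i+1) ≤ n ∧ 2*(k+1-(i+1)) ≤ m
        · rw [if_pos hc, if_pos ⟨hc.1, by omega, hc.2⟩, if_pos hc]
          rw [← shSum_add]
          apply shSum_congr
          intro A' B _ _
          rw [shSumU_cons_succ]
          congr 1
        · rw [if_neg hc, if_neg (by omega), if_neg hc, add_zero]
    rw [Finset.sum_congr rfl step, Finset.sum_add_distrib, Finset.sum_add_distrib]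
    congr 1
    · -- sum of d
      rw [Finset.sum_range_succ']
      have hd0 : d 0 = 0 := by rw [hd 0]; exact if_neg (by omega)
      rw [hd0, add_zero]
      apply Finset.sum_congr rfl
      intro i _
      rw [hd (i+1), hT1 i]
      by_cases hc : 2*(i+1) ≤ n ∧ 2*(k-i) ≤ m
      · rw [if_pos ⟨hc.1, by omega, by omega⟩, if_pos hc]
        have e1 : (i+1) - 1 = i := by omega
        have e2 : k + 1 - (i+1) = k - i := by omega
        rw [e1, e2]
      · rw [if_neg (by omega), if_neg hc]
    · -- sum of w
      rw [Finset.sum_range_succ]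
      have hwlast : w (k+1) = 0 := by
        rw [hw (k+1)]
        split
        · have hz : (shSum (n - 2*(k+1)) (p ++ q) fun A' B =>
              shSumU (k+1) fs fun fs₁ fs₂ => ω (k+1) A' fs₁ * η (k+1-(k+1)) B (f::fs₂))
              = shSum (n - 2*(k+1)) (p ++ q) fun _ _ => (0:S) := by
            apply shSum_congr
            intro A' B _ _
            exact shSumU_zero_of_lt (by omega) _
          rw [hz, shSum_zero_fn]
        · rfl
      rw [hwlast, add_zero]
  -- Step 2: per-index identity for the left-hand side
  have key : ∀ i ∈ Finset.range (k+1),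
      (if 2*i ≤ n ∧ 2*(k-i) ≤ m then
        shSum (n - 2*i) (p ++ x :: y :: q) (fun es₁ es₂ =>
          shSumU i fs fun fs₁ fs₂ => ω i es₁ fs₁ * η (k-i) es₂ fs₂)
        + shSum (n - 2*i) (p ++ y :: x :: q) (fun es₁ es₂ =>
          shSumU i fs fun fs₁ fs₂ => ω i es₁ fs₁ * η (k-i) es₂ fs₂)
      else 0)
      = -((if 2*(i+1) ≤ n ∧ 2*(k-i) ≤ m then T1 i else 0)
          + (if 2*i ≤ n ∧ 2*(k+1-i) ≤ m then T2 i else 0)) := by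
    intro i hi
    rw [Finset.mem_range] at hi
    by_cases hg : 2*i ≤ n ∧ 2*(k-i) ≤ m
    · rw [if_pos hg]
      obtain ⟨hg1, hg2⟩ := hg
      have swap := shSum_swap x y p q (n - 2*i)
        (fun es₁ es₂ => shSumU i fs fun fs₁ fs₂ => ω i es₁ fs₁ * η (k-i) es₂ fs₂)
        (fun A' B => -(shSumU i fs fun fs₁ fs₂ => ω (i+1) A' (f::fs₁) * η (k-i) B fs₂))
        (fun A' B => -(shSumU i fs fun fs₁ fs₂ => ω i A' fs₁ * η (k+1-i) B (f::fs₂)))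
        (by
          intro l₁ l₂ B h1 h2
          show _ = -(shSumU i fs fun fs₁ fs₂ => ω (i+1) (l₁ ++ l₂) (f::fs₁) * η (k-i) B fs₂)
          rw [← shSumU_add, ← shSumU_neg]
          apply shSumU_congr
          intro fs₁ fs₂ hfs₁ hfs₁₂
          rw [← add_mul, hω.skew i l₁ l₂ x y fs₁ (by omega) hfs₁, neg_mul])
        (by
          intro A' m₁ m₂ h1 h2
          show _ = -(shSumU i fs fun fs₁ fs₂ => ω i A' fs₁ * η (k+1-i) (m₁ ++ m₂) (f::fs₂))
          rw [← shSumU_add, ← shSumU_neg]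
          apply shSumU_congr
          intro fs₁ fs₂ hfs₁ hfs₁₂
          rw [← mul_add, hη.skew (k-i) m₁ m₂ x y fs₂ (by omega) (by omega), mul_neg]
          have : k - i + 1 = k + 1 - i := by omega
          rw [this])
      rw [swap]
      have hGpart : (if 2 ≤ n - 2*i then shSum (n - 2*i - 2) (p ++ q)
            (fun A' B => -(shSumU i fs fun fs₁ fs₂ => ω (i+1) A' (f::fs₁) * η (k-i) B fs₂)) else 0)
          = -(if 2*(i+1) ≤ n ∧ 2*(k-i) ≤ m then T1 i else 0) := by
        by_cases h2n : 2 ≤ n - 2*i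
        · rw [if_pos h2n, if_pos ⟨by omega, hg2⟩, shSum_neg, hT1 i]
          have e : n - 2*(i+1) = n - 2*i - 2 := by omega
          rw [e]
        · rw [if_neg h2n, if_neg (by omega), neg_zero]
      have hHpart : shSum (n - 2*i) (p ++ q)
            (fun A' B => -(shSumU i fs fun fs₁ fs₂ => ω i A' fs₁ * η (k+1-i) B (f::fs₂)))
          = -(if 2*i ≤ n ∧ 2*(k+1-i) ≤ m then T2 i else 0) := by
        by_cases h2m : 2*(k+1-i) ≤ m
        · rw [if_pos ⟨hg1, h2m⟩, shSum_neg, hT2 i]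
        · rw [if_neg (by omega), neg_zero]
          exact shSum_zero_of_lt (by simp only [List.length_append]; omega) _
      rw [hGpart, hHpart]
      abel
    · rw [if_neg hg, if_neg (by omega), if_neg (by omega)]
      simp
  -- Step 3: combine everything
  rw [cmul, cmul, ← Finset.sum_add_distrib]
  have lhs_eq : (∑ i ∈ Finset.range (k+1),
      ((if 2*i ≤ n ∧ 2*(k-i) ≤ m then
        shSum (n - 2*i) (p ++ x :: y :: q) (fun es₁ es₂ =>
          shSumU i fs fun fs₁ fs₂ => ω i es₁ fs₁ * η (k-i) es₂ fs₂) else 0)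
      + (if 2*i ≤ n ∧ 2*(k-i) ≤ m then
        shSum (n - 2*i) (p ++ y :: x :: q) (fun es₁ es₂ =>
          shSumU i fs fun fs₁ fs₂ => ω i es₁ fs₁ * η (k-i) es₂ fs₂) else 0)))
      = ∑ i ∈ Finset.range (k+1),
        -((if 2*(i+1) ≤ n ∧ 2*(k-i) ≤ m then T1 i else 0)
          + (if 2*i ≤ n ∧ 2*(k+1-i) ≤ m then T2 i else 0)) := by
    apply Finset.sum_congr rfl
    intro i hi
    rw [← key i hi]
    split
    · rfl
    · rw [add_zero]
  rw [lhs_eq, rhs_split, ← Finset.sum_neg_distrib]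

end MainProof

section Theorems

variable {𝕜 : Type u} [Field 𝕜] {L : Type v} [AddCommGroup L] [Module 𝕜 L]

theorem cmul_isCochain (A : LeibnizAlg 𝕜 L) (S : Type w) [CommRing S] [Algebra 𝕜 S]
    (ι : A.leftCenter →ₗ[𝕜] S) (hS : IsSymAlg S ι)
    (n m : ℕ) (ω η : ℕ → List L → List A.leftCenter → S)
    (hω : IsCochain A S n ω) (hη : IsCochain A S m η) :
    ∀ (k : ℕ) (p q : List L) (x y : L) (fs : List A.leftCenter),
      2*k + (p.length + 2 + q.length) = n + m → fs.length = k →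
      cmul A S n m ω η k (p ++ x :: y :: q) fs
        + cmul A S n m ω η k (p ++ y :: x :: q) fs
        = - cmul A S n m ω η (k+1) (p ++ q) (A.spZ x y :: fs) := by
  intro k p q x y fs hlen hfs
  exact cmul_skew_aux A S n m ω η hω hη k p q x y fs hlen hfs

end Theorems
end

section
/- Let L be a Leibniz algebra over a field 𝕜 with left center Z, and let ζ = (ζ₀,ζ₁) ∈ C²(L) be given by ζ₀(e₁,e₂) ≔ (e₁,e₂) and ζ₁(f) ≔ −2f. Then dζ = Θ, i.e. (dζ)₀(e₁,e₂,e₃) = (e₁∘e₂, e₃) and (dζ)₁(e; f) = −(e, f) for all e₁,e₂,e₃,e ∈ L and f ∈ Z. In particular the canonical 3-cochain Θ is a 3-coboundary. -/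
open scoped TensorProduct

universe u v w

section Theorems

variable {𝕜 : Type u} [Field 𝕜] {L : Type v} [AddCommGroup L] [Module 𝕜 L]

theorem dzeta_eq_Theta (A : LeibnizAlg 𝕜 L) (S : Type w) [CommRing S] [Algebra 𝕜 S]
    (ι : A.leftCenter →ₗ[𝕜] S) (hS : IsSymAlg S ι)
    (ρ : L → Derivation 𝕜 S S)
    (hρ : ∀ (e : L) (f : A.leftCenter), ρ e (ι f) = ι (A.brZ e f)) :
    (∀ e₁ e₂ e₃ : L,
      cd0 A S ρ (zetaC A S ι) 0 [e₁, e₂, e₃] [] + cdel A S (zetaC A S ι) 0 [e₁, e₂, e₃] []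
        = ThetaC A S ι 0 [e₁, e₂, e₃] []) ∧
    (∀ (e : L) (f : A.leftCenter),
      cd0 A S ρ (zetaC A S ι) 1 [e] [f] + cdel A S (zetaC A S ι) 1 [e] [f]
        = ThetaC A S ι 1 [e] [f]) := by
  constructor
  · intro e₁ e₂ e₃
    simp only [cd0, cdel, zetaC, ThetaC, List.length]
    simp [Finset.sum_range_succ, hρ, Finset.sum_Ico_eq_sum_range]
    have key : A.brZ e₁ (A.spZ e₂ e₃) - A.brZ e₂ (A.spZ e₁ e₃) + A.brZ e₃ (A.spZ e₁ e₂)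
        - A.spZ ((A.br e₁) e₂) e₃ - A.spZ e₂ ((A.br e₁) e₃) + A.spZ e₁ ((A.br e₂) e₃)
        = A.spZ ((A.br e₁) e₂) e₃ := by
      apply Subtype.ext
      simp only [LeibnizAlg.brZ, LeibnizAlg.spZ, LeibnizAlg.sp, AddSubmonoid.coe_add,
        Submodule.coe_add, Submodule.coe_sub, map_add, LinearMap.add_apply]
      rw [A.leibniz e₁ e₂ e₃, A.leibniz e₁ e₃ e₂, A.leibniz e₂ e₃ e₁]
      abel
    calc _ = ι (A.brZ e₁ (A.spZ e₂ e₃) - A.brZ e₂ (A.spZ e₁ e₃) + A.brZ e₃ (A.spZ e₁ e₂)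
        - A.spZ ((A.br e₁) e₂) e₃ - A.spZ e₂ ((A.br e₁) e₃) + A.spZ e₁ ((A.br e₂) e₃)) := by
          simp only [map_add, map_sub]; ring
      _ = _ := by rw [key]
  · intro e f
    simp only [cd0, cdel, zetaC, ThetaC, List.length]
    simp [Finset.sum_range_succ, hρ]
    have h1 : A.spZ ((f : A.leftCenter) : L) e = A.brZ e f := by
      apply Subtype.ext
      simp only [LeibnizAlg.brZ, LeibnizAlg.spZ, LeibnizAlg.sp, f.2 e, zero_add]
    have h2 : A.spZ e ((f : A.leftCenter) : L) = A.brZ e f := by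
      apply Subtype.ext
      simp only [LeibnizAlg.brZ, LeibnizAlg.spZ, LeibnizAlg.sp, f.2 e, add_zero]
    rw [h1, h2]
    module

end Theorems
end

section
/- Let L be a Leibniz algebra over a field 𝕜 with left center Z. The representable cochains form a subcomplex: if ω ∈ C̃^n(L) is representable, then dω ∈ C^{n+1}(L) is representable. -/
/-!
Write `dω(e₁,…,e_m,e)` out and sort its terms by what happens to the last argument `e`.
Terms in which `e` stays in the last slot are representable because `ω` is.
The term `±ρ(e) ω(e₁,…,e_m)` is representable because `e ↦ ρ(e)s` is, for every
`s ∈ S^•(Z)`: on generators `ρ(e)f = e∘f = (f,e)`, and since `Z` generates `S^•(Z)`, the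
Leibniz rule for `ρ(e)` propagates this to all of `S^•(Z)`.
The remaining terms pair up as `ρ(e_a) ω(…,e) − ω(…,e_a∘e)`; since `ρ(e_a)` is a derivation
and `e_a∘` is a derivation of the symmetric product,
`ρ(e_a)(x, e) − (x, e_a∘e) = (ρ(e_a)x + e_a∘x, e)` for `x ∈ S^•(Z) ⊗ L`.
-/

open scoped TensorProduct

universe u v w

section Theorems

variable {𝕜 : Type u} [Field 𝕜] {L : Type v} [AddCommGroup L] [Module 𝕜 L]

lemma List.eraseIdx_concat_length {α : Type*} (l : List α) (e : α) :
    (l ++ [e]).eraseIdx l.length = l := by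
  simp [List.eraseIdx_append_of_length_le]

lemma Submodule.fun_sum_mem {R α X M : Type*} [Semiring R] [AddCommMonoid M] [Module R M]
    {P : Submodule R (X → M)} (t : Finset α) {F : α → X → M} (hF : ∀ a ∈ t, F a ∈ P) :
    (fun e => ∑ a ∈ t, F a e) ∈ P := by
  simpa only [Finset.sum_fn] using P.sum_mem hF

lemma Submodule.fun_zsmul_mem {R X M : Type*} [Ring R] [AddCommGroup M] [Module R M]
    {P : Submodule R (X → M)} (c : ℤ) {F : X → M} (hF : F ∈ P) : (fun e => c • F e) ∈ P :=
  zsmul_mem hF c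

namespace LeibnizAlg

variable (A : LeibnizAlg 𝕜 L)

lemma brZ_spZ (a f e : L) :
    A.brZ a (A.spZ f e) = A.spZ (A.br a f) e + A.spZ f (A.br a e) := by
  apply Subtype.ext
  show A.br a (A.sp f e) = A.sp (A.br a f) e + A.sp f (A.br a e)
  simp only [sp, map_add, A.leibniz a f e, A.leibniz a e f]
  abel

lemma spZ_leftCenter (f : A.leftCenter) (e : L) : A.spZ f e = A.brZ e f :=
  Subtype.ext (by simp [spZ, sp, brZ, f.2 e])

end LeibnizAlg

section Representable

variable (A : LeibnizAlg 𝕜 L) (S : Type w) [CommRing S] [Algebra 𝕜 S]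
variable (ι : A.leftCenter →ₗ[𝕜] S)

lemma pairT_tmul (s t : S) (f e : L) :
    pairT A S ι (s ⊗ₜ[𝕜] f) (t ⊗ₜ[𝕜] e) = s * t * ι (A.spZ f e) := by
  simp [pairT, spS, TensorProduct.tensorTensorTensorComm_tmul, LeibnizAlg.spL]

lemma pairT_rTensor_mulLeft (t : S) (x y : S ⊗[𝕜] L) :
    pairT A S ι (LinearMap.rTensor L (LinearMap.mulLeft 𝕜 t) x) y = t * pairT A S ι x y := by
  induction x using TensorProduct.induction_on with
  | zero => simp
  | tmul s f =>
    induction y using TensorProduct.induction_on with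
    | zero => simp
    | tmul u e => rw [LinearMap.rTensor_tmul, pairT_tmul, pairT_tmul, LinearMap.mulLeft_apply]; ring
    | add y₁ y₂ h₁ h₂ => simp only [map_add, h₁, h₂, mul_add]
  | add x₁ x₂ h₁ h₂ => simp only [map_add, LinearMap.add_apply, h₁, h₂, mul_add]

/-- The image of `φ`: the maps `e ↦ (x, e)` with `x ∈ S^•(Z) ⊗ L`. -/
noncomputable def reprMaps : Submodule 𝕜 (L → S) :=
  LinearMap.range (LinearMap.pi fun e => (pairT A S ι).flip ((1 : S) ⊗ₜ[𝕜] e))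

variable {A S ι}

lemma mem_reprMaps_iff {F : L → S} :
    F ∈ reprMaps A S ι ↔ ∃ x : S ⊗[𝕜] L, ∀ e : L, pairT A S ι x ((1 : S) ⊗ₜ[𝕜] e) = F e := by
  simp [reprMaps, funext_iff]

lemma isRepr_iff {n : ℕ} {ω : ℕ → List L → List A.leftCenter → S} :
    IsRepr A S ι n ω ↔ ∀ (k : ℕ) (es : List L) (fs : List A.leftCenter),
      2*k + (es.length + 1) = n → fs.length = k →
        (fun e => ω k (es ++ [e]) fs) ∈ reprMaps A S ι := by
  simp only [IsRepr, mem_reprMaps_iff]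

lemma derivation_apply_pairT (ρ : L → Derivation 𝕜 S S)
    (hρ : ∀ (e : L) (f : A.leftCenter), ρ e (ι f) = ι (A.brZ e f)) (a : L) (x : S ⊗[𝕜] L) (e : L) :
    ρ a (pairT A S ι x ((1 : S) ⊗ₜ[𝕜] e))
      = pairT A S ι (LinearMap.rTensor L (ρ a).toLinearMap x + LinearMap.lTensor S (A.br a) x)
          ((1 : S) ⊗ₜ[𝕜] e)
        + pairT A S ι x ((1 : S) ⊗ₜ[𝕜] A.br a e) := by
  induction x using TensorProduct.induction_on with
  | zero => simp
  | tmul s f =>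
    simp only [LinearMap.rTensor_tmul, LinearMap.lTensor_tmul, map_add, LinearMap.add_apply,
      pairT_tmul, mul_one, Derivation.leibniz, hρ, A.brZ_spZ, Derivation.coeFn_coe, smul_eq_mul]
    ring
  | add x y hx hy =>
    simp only [map_add, LinearMap.add_apply, hx, hy]
    ring

lemma derivation_apply_sub_mem_reprMaps (ρ : L → Derivation 𝕜 S S)
    (hρ : ∀ (e : L) (f : A.leftCenter), ρ e (ι f) = ι (A.brZ e f)) {F : L → S}
    (hF : F ∈ reprMaps A S ι) (a : L) :
    (fun e => ρ a (F e) - F (A.br a e)) ∈ reprMaps A S ι := by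
  obtain ⟨x, hx⟩ := mem_reprMaps_iff.mp hF
  refine mem_reprMaps_iff.mpr
    ⟨LinearMap.rTensor L (ρ a).toLinearMap x + LinearMap.lTensor S (A.br a) x, fun e => ?_⟩
  rw [← hx, ← hx, derivation_apply_pairT ρ hρ, add_sub_cancel_right]

end Representable

lemma IsSymAlg.algHom_ext {Z : Type v} [AddCommGroup Z] [Module 𝕜 Z] {S : Type w} [CommRing S]
    [Algebra 𝕜 S] {ι : Z →ₗ[𝕜] S} (hS : IsSymAlg S ι) {B : Type w} [CommRing B] [Algebra 𝕜 B]
    {g₁ g₂ : S →ₐ[𝕜] B} (h : ∀ z, g₁ (ι z) = g₂ (ι z)) : g₁ = g₂ := by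
  -- `IsSymAlg` only speaks about algebras in universe `max u v w`, hence the `ULift`.
  let up : B →ₐ[𝕜] ULift.{max u v} B := ULift.algEquiv.symm.toAlgHom
  obtain ⟨_, -, huniq⟩ := hS (ULift.{max u v} B) (up.toLinearMap.comp (g₁.toLinearMap.comp ι))
  have h₁ : up.comp g₁ = up.comp g₂ :=
    (huniq _ fun _ => rfl).trans (huniq _ fun z => by simp [h z]).symm
  ext s
  simpa [up] using congrArg (fun g => (g s).down) h₁

lemma IsSymAlg.adjoin_range_eq_top {Z : Type v} [AddCommGroup Z] [Module 𝕜 Z] {S : Type w}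
    [CommRing S] [Algebra 𝕜 S] {ι : Z →ₗ[𝕜] S} (hS : IsSymAlg S ι) :
    Algebra.adjoin 𝕜 (Set.range ι) = ⊤ := by
  set B := Algebra.adjoin 𝕜 (Set.range ι)
  let ιB : Z →ₗ[𝕜] ULift.{max u v} B :=
    ULift.algEquiv.symm.toLinearMap.comp
      (ι.codRestrict B.toSubmodule fun z => Algebra.subset_adjoin ⟨z, rfl⟩)
  obtain ⟨h, hh, -⟩ := hS _ ιB
  have hproj : B.val.comp (ULift.algEquiv.toAlgHom.comp h) = AlgHom.id 𝕜 S :=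
    hS.algHom_ext fun z => by rw [AlgHom.comp_apply, AlgHom.comp_apply, hh z]; rfl
  refine eq_top_iff.mpr fun s _ => ?_
  rw [← AlgHom.id_apply (R := 𝕜) s, ← hproj]
  exact (ULift.algEquiv.toAlgHom.comp h s).2

lemma derivation_apply_mem_reprMaps {A : LeibnizAlg 𝕜 L} {S : Type w} [CommRing S] [Algebra 𝕜 S]
    {ι : A.leftCenter →ₗ[𝕜] S} (hS : IsSymAlg S ι) (ρ : L → Derivation 𝕜 S S)
    (hρ : ∀ (e : L) (f : A.leftCenter), ρ e (ι f) = ι (A.brZ e f)) (s : S) :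
    (fun e => ρ e s) ∈ reprMaps A S ι := by
  have hs : s ∈ Algebra.adjoin 𝕜 (Set.range ι) := hS.adjoin_range_eq_top ▸ trivial
  induction hs using Algebra.adjoin_induction with
  | mem x hx =>
    obtain ⟨f, rfl⟩ := hx
    exact mem_reprMaps_iff.mpr ⟨(1 : S) ⊗ₜ[𝕜] (f : L), fun e => by
      rw [pairT_tmul, one_mul, one_mul, hρ, A.spZ_leftCenter]⟩
  | algebraMap r =>
    simp only [Derivation.map_algebraMap]
    exact zero_mem _
  | add x y _ _ hx hy =>
    simp only [map_add]
    exact add_mem hx hy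
  | mul x y _ _ hx hy =>
    obtain ⟨u, hu⟩ := mem_reprMaps_iff.mp hx
    obtain ⟨v, hv⟩ := mem_reprMaps_iff.mp hy
    refine mem_reprMaps_iff.mpr
      ⟨LinearMap.rTensor L (LinearMap.mulLeft 𝕜 x) v
        + LinearMap.rTensor L (LinearMap.mulLeft 𝕜 y) u, fun e => ?_⟩
    rw [map_add, LinearMap.add_apply, pairT_rTensor_mulLeft, pairT_rTensor_mulLeft, hu, hv,
      Derivation.leibniz, smul_eq_mul, smul_eq_mul]

lemma cd0_append_singleton (A : LeibnizAlg 𝕜 L) (S : Type w) [CommRing S] [Algebra 𝕜 S]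
    (ρ : L → Derivation 𝕜 S S) (ω : ℕ → List L → List A.leftCenter → S) (k : ℕ) (es : List L)
    (fs : List A.leftCenter) (e : L) :
    cd0 A S ρ ω k (es ++ [e]) fs
      = ∑ a ∈ Finset.range es.length, (-1 : ℤ)^a •
          (ρ (es.getD a 0) (ω k (es.eraseIdx a ++ [e]) fs)
            - ω k (es.eraseIdx a ++ [A.br (es.getD a 0) e]) fs)
        + (-1 : ℤ)^es.length • ρ e (ω k es fs)
        + ∑ a ∈ Finset.range es.length, ∑ b ∈ Finset.Ico (a+1) es.length, (-1 : ℤ)^(a+1) •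
            ω k ((es.eraseIdx a).set (b-1) (A.br (es.getD a 0) (es.getD b 0)) ++ [e]) fs := by
  have hρsum : ∀ a ∈ Finset.range es.length,
      (-1 : ℤ)^a • ρ ((es ++ [e]).getD a 0) (ω k ((es ++ [e]).eraseIdx a) fs)
        = (-1 : ℤ)^a • ρ (es.getD a 0) (ω k (es.eraseIdx a ++ [e]) fs) := fun a ha => by
    have ha := Finset.mem_range.mp ha
    rw [List.getD_append _ _ _ _ ha, List.eraseIdx_append_of_lt_length ha]
  have hbrsum : ∀ a ∈ Finset.range es.length,
      ∑ b ∈ Finset.Ico (a+1) (es.length+1), (-1 : ℤ)^(a+1) • ω k (((es ++ [e]).eraseIdx a).set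
          (b-1) (A.br ((es ++ [e]).getD a 0) ((es ++ [e]).getD b 0))) fs
        = ∑ b ∈ Finset.Ico (a+1) es.length, (-1 : ℤ)^(a+1) •
            ω k ((es.eraseIdx a).set (b-1) (A.br (es.getD a 0) (es.getD b 0)) ++ [e]) fs
          - (-1 : ℤ)^a • ω k (es.eraseIdx a ++ [A.br (es.getD a 0) e]) fs := fun a ha => by
    have ha := Finset.mem_range.mp ha
    have hlen := List.length_eraseIdx_of_lt ha
    rw [Finset.sum_Ico_succ_top ha, sub_eq_add_neg]
    congr 1
    · refine Finset.sum_congr rfl fun b hb => ?_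
      have hb := Finset.mem_Ico.mp hb
      rw [List.getD_append _ _ _ _ ha, List.getD_append _ _ _ _ hb.2,
        List.eraseIdx_append_of_lt_length ha, List.set_append, if_pos (by omega)]
    · rw [List.getD_append _ _ _ _ ha, List.getD_append_right _ _ _ _ le_rfl, Nat.sub_self,
        List.getD_cons_zero, List.eraseIdx_append_of_lt_length ha, List.set_append,
        if_neg (by omega), hlen, Nat.sub_self, List.set_cons_zero, pow_succ, mul_neg_one, neg_smul]
  simp only [cd0, List.length_append, List.length_singleton, Finset.sum_range_succ,
    Finset.Ico_self, Finset.sum_empty, add_zero, List.getD_append_right _ _ _ _ le_rfl,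
    Nat.sub_self, List.getD_cons_zero, List.eraseIdx_concat_length,
    Finset.sum_congr rfl hρsum, Finset.sum_congr rfl hbrsum, smul_sub, Finset.sum_sub_distrib]
  abel

theorem d_repr_general (A : LeibnizAlg 𝕜 L) (S : Type w) [CommRing S] [Algebra 𝕜 S]
    (ι : A.leftCenter →ₗ[𝕜] S) (hS : IsSymAlg S ι)
    (ρ : L → Derivation 𝕜 S S)
    (hρ : ∀ (e : L) (f : A.leftCenter), ρ e (ι f) = ι (A.brZ e f))
    (n : ℕ) (ω : ℕ → List L → List A.leftCenter → S)
    (hrep : IsRepr A S ι n ω) :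
    IsRepr A S ι (n+1) (fun k es fs => cd0 A S ρ ω k es fs + cdel A S ω k es fs) := by
  rw [isRepr_iff] at hrep ⊢
  intro k es fs hlen hfs
  have hrep_k : ∀ es' : List L, es'.length + 1 = es.length →
      (fun e => ω k (es' ++ [e]) fs) ∈ reprMaps A S ι :=
    fun es' hes' => hrep k es' fs (by omega) hfs
  have herase : ∀ a ∈ Finset.range es.length, (es.eraseIdx a).length + 1 = es.length :=
    fun a ha => by
      have ha := Finset.mem_range.mp ha
      rw [List.length_eraseIdx_of_lt ha]
      omega
  simp only [cd0_append_singleton]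
  refine add_mem (add_mem (add_mem ?_ ?_) ?_) ?_
  · exact Submodule.fun_sum_mem _ fun a ha => Submodule.fun_zsmul_mem _ <|
      derivation_apply_sub_mem_reprMaps ρ hρ (hrep_k _ (herase a ha)) _
  · exact Submodule.fun_zsmul_mem _ (derivation_apply_mem_reprMaps hS ρ hρ _)
  · exact Submodule.fun_sum_mem _ fun a ha => Submodule.fun_sum_mem _ fun b _ =>
      Submodule.fun_zsmul_mem _ (hrep_k _ (by rw [List.length_set, herase a ha]))
  · refine Submodule.fun_sum_mem _ fun j hj => ?_
    have hj := Finset.mem_range.mp hj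
    exact hrep (k-1) ((fs.getD j 0 : L) :: es) (fs.eraseIdx j)
      (by simp only [List.length_cons]; omega) (by rw [List.length_eraseIdx_of_lt hj, hfs])

theorem d_repr (A : LeibnizAlg 𝕜 L) (S : Type w) [CommRing S] [Algebra 𝕜 S]
    (ι : A.leftCenter →ₗ[𝕜] S) (hS : IsSymAlg S ι)
    (ρ : L → Derivation 𝕜 S S)
    (hρ : ∀ (e : L) (f : A.leftCenter), ρ e (ι f) = ι (A.brZ e f))
    (n : ℕ) (ω : ℕ → List L → List A.leftCenter → S)
    (hω : IsCochain A S n ω) (hrep : IsRepr A S ι n ω) :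
    IsRepr A S ι (n+1) (fun k es fs => cd0 A S ρ ω k es fs + cdel A S ω k es fs) :=
  d_repr_general A S ι hS ρ hρ n ω hrep

end Theorems
end
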